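/- Let A be an n × n matrix over ℤ with n ≥ 2 such that the permanent of (|A(i,j)|) equals 1. Then some row or some column of A contains exactly one nonzero entry, and that entry is ±1. -/

import Mathlib

/-!
Since the entries of `|A|` are nonnegative integers and `per |A| = 1`, exactly one permutation `σ`
contributes, with `|A i (σ i)| = 1` for all `i`. If every row `i` had a second nonzero entry, in
column `f i ≠ σ i`, then the map `σ⁻¹ ∘ f` has a cycle (the type is finite); moving along that
cycle from `σ` to `f` and keeping `σ` elsewhere gives a second permutation with nonzero
contribution, a contradiction.
-/

open Finset Function Equiv
open scoped Matrix

theorem Function.nonempty_periodicPts {α : Type*} [Finite α] [Nonempty α] (f : α → α) :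
    (periodicPts f).Nonempty := by
  obtain ⟨x⟩ := ‹Nonempty α›
  obtain ⟨m, n, hne, heq⟩ := Finite.exists_ne_map_eq_of_infinite (f^[·] x)
  wlog hlt : m < n generalizing m n
  · exact this n m hne.symm heq.symm (by omega)
  refine ⟨f^[m] x, mk_mem_periodicPts (n := n - m) (by omega) ?_⟩
  rw [IsPeriodicPt, IsFixedPt, ← iterate_add_apply, Nat.sub_add_cancel hlt.le, heq]

theorem Equiv.exists_ne_forall_eq_or_eq {α β : Type*} [Finite α] [Nonempty α] (σ : α ≃ β)
    (f : α → β) (hf : ∀ i, f i ≠ σ i) : ∃ τ : α ≃ β, τ ≠ σ ∧ ∀ i, τ i = σ i ∨ τ i = f i := by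
  classical
  set g : α → α := σ.symm ∘ f
  set c : Perm α := Perm.ofSubtype ((bijOn_periodicPts g).equiv g)
  have hc : ∀ i, c i = g i ∨ c i = i := fun i => by
    by_cases hi : i ∈ periodicPts g
    · exact .inl (Perm.ofSubtype_apply_of_mem _ hi)
    · exact .inr (Perm.ofSubtype_apply_of_not_mem _ hi)
  obtain ⟨x, hx⟩ := nonempty_periodicPts g
  refine ⟨c.trans σ, fun h => hf x ?_, fun i => ?_⟩
  · have : c x = g x := Perm.ofSubtype_apply_of_mem _ hx
    rw [← h, trans_apply, this]
    simp [g]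
  · rcases hc i with h | h <;> simp [h, g]

theorem Finset.exists_eq_one_forall_eq_zero_of_sum_eq_one {ι : Type*} {s : Finset ι}
    {f : ι → ℕ} (h : ∑ i ∈ s, f i = 1) : ∃ i ∈ s, f i = 1 ∧ ∀ j ∈ s, j ≠ i → f j = 0 := by
  obtain ⟨i, hi, hfi⟩ := exists_ne_zero_of_sum_ne_zero (h.trans_ne one_ne_zero)
  refine ⟨i, hi, ?_, fun j hj hji => ?_⟩
  · have := h ▸ single_le_sum (fun j _ => Nat.zero_le (f j)) hi
    omega
  · have := h ▸ add_le_sum (fun j _ => Nat.zero_le (f j)) hi hj hji.symm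
    omega

theorem Matrix.exists_col_eq_single_one_of_permanent_eq_one {n : Type*} [Fintype n]
    [DecidableEq n] [Nonempty n] {M : Matrix n n ℕ} (h : M.permanent = 1) :
    ∃ i j, M i j = 1 ∧ ∀ i', i' ≠ i → M i' j = 0 := by
  obtain ⟨σ, -, hσ, hunique⟩ := exists_eq_one_forall_eq_zero_of_sum_eq_one h
  rw [prod_eq_one_iff] at hσ
  by_contra! hcol
  choose f hf hfnz using fun j => hcol (σ j) j (hσ j (mem_univ j))
  obtain ⟨τ, hτσ, hτ⟩ := σ.exists_ne_forall_eq_or_eq f hf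
  refine prod_ne_zero_iff.mpr (fun j _ => ?_) (hunique τ (mem_univ τ) hτσ)
  rcases hτ j with h | h <;> rw [h]
  · exact (hσ j (mem_univ j)).trans_ne one_ne_zero
  · exact hfnz j

/-- If an n × n integer matrix with n ≥ 2 has permanent of absolute values equal
to 1, then some row or some column contains exactly one nonzero entry, and that
entry is ±1. -/
theorem stmt_10 {n : ℕ} (hn : 2 ≤ n) (A : Matrix (Fin n) (Fin n) ℤ)
    (hper : ∑ σ : Equiv.Perm (Fin n), ∏ i, |A i (σ i)| = 1) :
    (∃ i j, (A i j = 1 ∨ A i j = -1) ∧ ∀ j', j' ≠ j → A i j' = 0) ∨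
    (∃ i j, (A i j = 1 ∨ A i j = -1) ∧ ∀ i', i' ≠ i → A i' j = 0) := by
  have : Nonempty (Fin n) := ⟨⟨0, by omega⟩⟩
  set B : Matrix (Fin n) (Fin n) ℕ := fun i j => (A i j).natAbs
  have hB : Bᵀ.permanent = 1 := by
    simp_rw [← Int.natCast_natAbs] at hper
    exact_mod_cast hper
  obtain ⟨j, i, hij, hrow⟩ := Matrix.exists_col_eq_single_one_of_permanent_eq_one hB
  exact .inl ⟨i, j, Int.natAbs_eq_iff.mp hij, fun j' hj' => Int.natAbs_eq_zero.mp (hrow j' hj')⟩
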